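/- Worst-case CVaR of an affine loss over a Wasserstein ball is Lipschitz-inflated: for a vector a ∈ ℝⁿ and Borel probability measures μ, ν on ℝⁿ with d_W(μ, ν) ≤ θ, one has CVaR_β^ν[aᵀw] ≤ CVaR_β^μ[aᵀw] + β⁻¹ ‖a‖ θ. -/

import Mathlib

open MeasureTheory RealInnerProductSpace

/-- Conditional value-at-risk via the Rockafellar–Uryasev infimum formula. -/
noncomputable def cvar {Ω : Type*} [MeasurableSpace Ω] (μ : Measure Ω) (β : ℝ) (Z : Ω → ℝ) : ℝ :=
  ⨅ t : ℝ, (t + β⁻¹ * ∫ ω, max (Z ω - t) 0 ∂μ)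

/-- The 1-Wasserstein distance, as the infimum over couplings of the expected distance. -/
noncomputable def wassersteinDist {E : Type*} [MeasurableSpace E] [NormedAddCommGroup E]
    (μ ν : Measure E) : ℝ :=
  sInf {r : ℝ | ∃ γ : Measure (E × E), IsProbabilityMeasure γ ∧
    γ.map Prod.fst = μ ∧ γ.map Prod.snd = ν ∧ r = ∫ p, ‖p.1 - p.2‖ ∂γ}

/-! Fix a threshold `t`. The integrand `w ↦ max (⟪a, w⟫ - t) 0` is `‖a‖`-Lipschitz, so along any
coupling `γ` of `μ` and `ν` its `ν`-mean exceeds its `μ`-mean by at most `‖a‖ ∫ ‖x - y‖ dγ`;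
minimising over couplings gives the excess bound `‖a‖ θ`. Hence the Rockafellar–Uryasev objective
of `ν` exceeds that of `μ` by at most `β⁻¹ ‖a‖ θ` at every `t`, and the inequality passes to the
infima because the objective of `ν` is bounded below by the mean of the loss.
Compactness of the common support `W` provides all the integrability. -/

open scoped NNReal

section CompactSupport

variable {X : Type*} [MeasurableSpace X]

theorem Continuous.integrable_of_ae_mem_isCompact [TopologicalSpace X] [OpensMeasurableSpace X]
    [T2Space X] {E : Type*} [NormedAddCommGroup E] {μ : Measure X} [IsFiniteMeasure μ] {K : Set X}
    (hK : IsCompact K) (hμK : ∀ᵐ x ∂μ, x ∈ K) {g : X → E} (hg : Continuous g) :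
    Integrable g μ := by
  rw [← Measure.restrict_eq_self_of_ae_mem hμK]
  exact hg.continuousOn.integrableOn_compact hK

theorem ae_mem_prod_of_map_fst_of_map_snd {Y : Type*} [MeasurableSpace Y] {μ : Measure X}
    {ν : Measure Y} {γ : Measure (X × Y)} (hγμ : γ.map Prod.fst = μ) (hγν : γ.map Prod.snd = ν)
    {s : Set X} {t : Set Y} (hs : ∀ᵐ x ∂μ, x ∈ s) (ht : ∀ᵐ y ∂ν, y ∈ t) :
    ∀ᵐ p ∂γ, p ∈ s ×ˢ t := by
  subst hγμ hγν
  filter_upwards [ae_of_ae_map measurable_fst.aemeasurable hs,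
    ae_of_ae_map measurable_snd.aemeasurable ht] with p hp₁ hp₂
  exact ⟨hp₁, hp₂⟩

end CompactSupport

section Wasserstein

variable {E : Type*} [NormedAddCommGroup E] [MeasurableSpace E]

theorem LipschitzWith.integral_comp_snd_le {γ : Measure (E × E)} {f : E → ℝ} {K : ℝ≥0}
    (hf : LipschitzWith K f) (h₁ : Integrable (fun p => f p.1) γ)
    (h₂ : Integrable (fun p => f p.2) γ) (hd : Integrable (fun p => ‖p.1 - p.2‖) γ) :
    ∫ p, f p.2 ∂γ ≤ ∫ p, f p.1 ∂γ + K * ∫ p, ‖p.1 - p.2‖ ∂γ := by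
  have hpt : ∀ p : E × E, f p.2 ≤ f p.1 + K * ‖p.1 - p.2‖ := fun p => by
    have := hf.dist_le_mul p.1 p.2
    rw [Real.dist_eq, dist_eq_norm] at this
    linarith [neg_abs_le (f p.1 - f p.2)]
  calc ∫ p, f p.2 ∂γ ≤ ∫ p, (f p.1 + K * ‖p.1 - p.2‖) ∂γ :=
        integral_mono h₂ (h₁.add (hd.const_mul _)) hpt
    _ = ∫ p, f p.1 ∂γ + K * ∫ p, ‖p.1 - p.2‖ ∂γ := by
        rw [integral_add h₁ (hd.const_mul _), integral_const_mul]

variable [BorelSpace E] [SecondCountableTopology E]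

theorem LipschitzWith.integral_le_integral_add_mul_wassersteinDist {μ ν : Measure E}
    [IsProbabilityMeasure μ] [IsProbabilityMeasure ν] {W : Set E} (hW : IsCompact W)
    (hμ : ∀ᵐ x ∂μ, x ∈ W) (hν : ∀ᵐ x ∂ν, x ∈ W) {f : E → ℝ} {K : ℝ≥0}
    (hf : LipschitzWith K f) :
    ∫ x, f x ∂ν ≤ ∫ x, f x ∂μ + K * wassersteinDist μ ν := by
  set S : Set ℝ := {r : ℝ | ∃ γ : Measure (E × E), IsProbabilityMeasure γ ∧
    γ.map Prod.fst = μ ∧ γ.map Prod.snd = ν ∧ r = ∫ p, ‖p.1 - p.2‖ ∂γ}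
  have hS : S.Nonempty := ⟨_, μ.prod ν, inferInstance, by simp, by simp, rfl⟩
  have hcoupling : ∀ r ∈ S, ∫ x, f x ∂ν - ∫ x, f x ∂μ ≤ K * r := by
    rintro r ⟨γ, hγ, hγμ, hγν, rfl⟩
    have hγW := ae_mem_prod_of_map_fst_of_map_snd hγμ hγν hμ hν
    have hint {g : E × E → ℝ} (hg : Continuous g) : Integrable g γ :=
      hg.integrable_of_ae_mem_isCompact (hW.prod hW) hγW
    have hfμ : ∫ x, f x ∂μ = ∫ p, f p.1 ∂γ := by
      rw [← hγμ, integral_map measurable_fst.aemeasurable hf.continuous.aestronglyMeasurable]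
    have hfν : ∫ x, f x ∂ν = ∫ p, f p.2 ∂γ := by
      rw [← hγν, integral_map measurable_snd.aemeasurable hf.continuous.aestronglyMeasurable]
    have := hf.integral_comp_snd_le (hint (hf.continuous.comp continuous_fst))
      (hint (hf.continuous.comp continuous_snd)) (hint (continuous_fst.sub continuous_snd).norm)
    rw [hfμ, hfν]
    linarith
  have : ∫ x, f x ∂ν - ∫ x, f x ∂μ ≤ K * sInf S := by
    rw [← smul_eq_mul, ← Real.sInf_smul_of_nonneg K.coe_nonneg]
    refine le_csInf hS.smul_set ?_
    rintro _ ⟨r, hr, rfl⟩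
    exact hcoupling r hr
  unfold wassersteinDist
  linarith

end Wasserstein

section CVaR

variable {Ω : Type*} [MeasurableSpace Ω] {β : ℝ} {Z : Ω → ℝ}

theorem integral_le_cvar_objective {μ : Measure Ω} [IsProbabilityMeasure μ] (hβ₀ : 0 < β)
    (hβ₁ : β ≤ 1) (hZ : Integrable Z μ) (t : ℝ) :
    ∫ ω, Z ω ∂μ ≤ t + β⁻¹ * ∫ ω, max (Z ω - t) 0 ∂μ := by
  have hβinv : 1 ≤ β⁻¹ := one_le_inv₀ hβ₀ |>.mpr hβ₁
  have hZt : Integrable (fun ω => Z ω - t) μ := hZ.sub (integrable_const t)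
  have hmean : ∫ ω, Z ω ∂μ - t ≤ ∫ ω, max (Z ω - t) 0 ∂μ := by
    have : ∫ ω, (Z ω - t) ∂μ = ∫ ω, Z ω ∂μ - t := by
      simp [integral_sub hZ (integrable_const t)]
    rw [← this]
    exact integral_mono hZt hZt.pos_part fun ω => le_max_left _ _
  have hpos : 0 ≤ ∫ ω, max (Z ω - t) 0 ∂μ := integral_nonneg fun ω => le_max_right _ _
  rcases le_or_gt (∫ ω, Z ω ∂μ) t with ht | ht <;> nlinarith

theorem cvar_le_cvar_add {μ ν : Measure Ω} [IsProbabilityMeasure ν] (hβ₀ : 0 < β)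
    (hβ₁ : β ≤ 1) (hZ : Integrable Z ν) {c : ℝ}
    (h : ∀ t, ∫ ω, max (Z ω - t) 0 ∂ν ≤ ∫ ω, max (Z ω - t) 0 ∂μ + c) :
    cvar ν β Z ≤ cvar μ β Z + β⁻¹ * c := by
  have hbdd : BddBelow (Set.range fun t => t + β⁻¹ * ∫ ω, max (Z ω - t) 0 ∂ν) :=
    ⟨_, Set.forall_mem_range.mpr (integral_le_cvar_objective hβ₀ hβ₁ hZ)⟩
  suffices cvar ν β Z - β⁻¹ * c ≤ cvar μ β Z by linarith
  refine le_ciInf fun t => ?_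
  have := mul_le_mul_of_nonneg_left (h t) (inv_nonneg.mpr hβ₀.le)
  have := ciInf_le hbdd t
  unfold cvar
  linarith

end CVaR

theorem lipschitzWith_inner_sub_const {F : Type*} [NormedAddCommGroup F] [InnerProductSpace ℝ F]
    (a : F) (t : ℝ) : LipschitzWith ‖a‖₊ fun w => ⟪a, w⟫ - t :=
  LipschitzWith.of_dist_le_mul fun x y => by
    rw [Real.dist_eq, sub_sub_sub_cancel_right, ← inner_sub_right, dist_eq_norm]
    exact abs_real_inner_le_norm a _

theorem cvar_affine_wasserstein_inflation_general {n : ℕ}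
    (a : EuclideanSpace ℝ (Fin n)) (β θ : ℝ) (hβ : β ∈ Set.Ioo (0 : ℝ) 1)
    (W : Set (EuclideanSpace ℝ (Fin n))) (hW : IsCompact W)
    (μ ν : Measure (EuclideanSpace ℝ (Fin n)))
    [IsProbabilityMeasure μ] [IsProbabilityMeasure ν]
    (hμ : μ Wᶜ = 0) (hν : ν Wᶜ = 0)
    (h : wassersteinDist μ ν ≤ θ) :
    cvar ν β (fun w => ⟪a, w⟫) ≤ cvar μ β (fun w => ⟪a, w⟫) + β⁻¹ * ‖a‖ * θ := by
  have hμW : ∀ᵐ w ∂μ, w ∈ W := mem_ae_iff.mpr hμ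
  have hνW : ∀ᵐ w ∂ν, w ∈ W := mem_ae_iff.mpr hν
  have hZ : Integrable (fun w => ⟪a, w⟫) ν :=
    (continuous_const.inner continuous_id).integrable_of_ae_mem_isCompact hW hνW
  rw [mul_assoc]
  refine cvar_le_cvar_add hβ.1 hβ.2.le hZ fun t => ?_
  calc ∫ w, max (⟪a, w⟫ - t) 0 ∂ν
      ≤ ∫ w, max (⟪a, w⟫ - t) 0 ∂μ + ‖a‖ * wassersteinDist μ ν :=
        LipschitzWith.integral_le_integral_add_mul_wassersteinDist hW hμW hνW
          ((lipschitzWith_inner_sub_const a t).max_const 0)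
    _ ≤ ∫ w, max (⟪a, w⟫ - t) 0 ∂μ + ‖a‖ * θ := by gcongr

theorem cvar_affine_wasserstein_inflation {n : ℕ}
    (a : EuclideanSpace ℝ (Fin n)) (β θ : ℝ) (hβ : β ∈ Set.Ioo (0 : ℝ) 1) (hθ : 0 ≤ θ)
    (W : Set (EuclideanSpace ℝ (Fin n))) (hW : IsCompact W)
    (μ ν : Measure (EuclideanSpace ℝ (Fin n)))
    [IsProbabilityMeasure μ] [IsProbabilityMeasure ν]
    (hμ : μ Wᶜ = 0) (hν : ν Wᶜ = 0)
    (h : wassersteinDist μ ν ≤ θ) :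
    cvar ν β (fun w => ⟪a, w⟫) ≤ cvar μ β (fun w => ⟪a, w⟫) + β⁻¹ * ‖a‖ * θ :=
  cvar_affine_wasserstein_inflation_general a β θ hβ W hW μ ν hμ hν h
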